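/- arXiv:2110.09411 — 5 statements merged into one kernel-verified Lean document; each statement's English description precedes it below -/
import Mathlib

section
/- For all n, v ∈ ℕ₀ and all x, k, z ∈ ℂ, _Tℬ^{(s,v)}_{n,μ}(x+k,z;λ) = Σ_{r=0}^{n} binomial(n,r) · ℬ^{(s,v)}_{n−r,μ}(x,z;λ) · T_r(k). -/
/-!
Parametric kinds of generalized Apostol–Bernoulli polynomials (Özat–Çekim–Kızılateş–Qi).
All generating functions are formal power series in `t` over `ℂ`; each polynomial family is
`n!` times the `n`-th coefficient of its generating series.
-/

open PowerSeries

noncomputable section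

/-- The formal power series `t / (λ eᵗ + μ)`. -/
def bker (lam mu : ℂ) : ℂ⟦X⟧ := X * (C lam * exp ℂ + C mu)⁻¹

/-- The formal power series `e^{x t}`. -/
def expS (x : ℂ) : ℂ⟦X⟧ := rescale x (exp ℂ)

/-- The formal power series `cos (z t)`. -/
def cosS (z : ℂ) : ℂ⟦X⟧ := rescale z (cos ℂ)

/-- The formal power series `sin (z t)`. -/
def sinS (z : ℂ) : ℂ⟦X⟧ := rescale z (sin ℂ)

/-- Parametric (cosine) kind of generalized Apostol–Bernoulli polynomials
`_Tℬ^{(c,v)}_{n,μ}(x,z;λ)`, defined by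
`(t/(λeᵗ+μ))^v e^{xt} U(t) cos(zt) = Σ_n _Tℬ^{(c,v)}_{n,μ}(x,z;λ) tⁿ/n!`. -/
def TBc (lam mu : ℂ) (U : ℂ⟦X⟧) (v n : ℕ) (x z : ℂ) : ℂ :=
  n.factorial * coeff n (bker lam mu ^ v * expS x * U * cosS z)

/-- Parametric (sine) kind of generalized Apostol–Bernoulli polynomials
`_Tℬ^{(s,v)}_{n,μ}(x,z;λ)`, defined by
`(t/(λeᵗ+μ))^v e^{xt} U(t) sin(zt) = Σ_n _Tℬ^{(s,v)}_{n,μ}(x,z;λ) tⁿ/n!`. -/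
def TBs (lam mu : ℂ) (U : ℂ⟦X⟧) (v n : ℕ) (x z : ℂ) : ℂ :=
  n.factorial * coeff n (bker lam mu ^ v * expS x * U * sinS z)

/-- `_Tℬ^{(v)}_{n,μ}(x;λ)`, defined by
`(t/(λeᵗ+μ))^v e^{xt} U(t) = Σ_n _Tℬ^{(v)}_{n,μ}(x;λ) tⁿ/n!`. -/
def TB (lam mu : ℂ) (U : ℂ⟦X⟧) (v n : ℕ) (x : ℂ) : ℂ :=
  n.factorial * coeff n (bker lam mu ^ v * expS x * U)

/-- Cosine generalized Apostol–Bernoulli polynomials `ℬ^{(c,v)}_{n,μ}(x,z;λ)`, defined by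
`(t/(λeᵗ+μ))^v e^{xt} cos(zt) = Σ_n ℬ^{(c,v)}_{n,μ}(x,z;λ) tⁿ/n!`. -/
def Bc (lam mu : ℂ) (v n : ℕ) (x z : ℂ) : ℂ :=
  n.factorial * coeff n (bker lam mu ^ v * expS x * cosS z)

/-- Sine generalized Apostol–Bernoulli polynomials `ℬ^{(s,v)}_{n,μ}(x,z;λ)`. -/
def Bs (lam mu : ℂ) (v n : ℕ) (x z : ℂ) : ℂ :=
  n.factorial * coeff n (bker lam mu ^ v * expS x * sinS z)

/-- Generalized Apostol–Bernoulli polynomials of order `v`: `ℬ^{(v)}_{n,μ}(x;λ)`, defined by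
`(t/(λeᵗ+μ))^v e^{xt} = Σ_n ℬ^{(v)}_{n,μ}(x;λ) tⁿ/n!`. -/
def Bpoly (lam mu : ℂ) (v n : ℕ) (x : ℂ) : ℂ :=
  n.factorial * coeff n (bker lam mu ^ v * expS x)

/-- Generalized Apostol–Bernoulli numbers `ℬ^{(v)}_{n,μ}(λ) := ℬ^{(v)}_{n,μ}(0;λ)`. -/
def Bnum (lam mu : ℂ) (v n : ℕ) : ℂ := Bpoly lam mu v n 0

/-- The 2-variable general polynomials `T_n(x)`, defined by `e^{xt} U(t) = Σ_n T_n(x) tⁿ/n!`. -/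
def Tpoly (U : ℂ⟦X⟧) (n : ℕ) (x : ℂ) : ℂ := n.factorial * coeff n (expS x * U)

/-- `U_n := n!` times the `n`-th coefficient of `U`. -/
def Unum (U : ℂ⟦X⟧) (n : ℕ) : ℂ := n.factorial * coeff n U

/-- `C_n(x,y)`, defined by `e^{xt} cos(yt) = Σ_n C_n(x,y) tⁿ/n!`. -/
def Cpoly (n : ℕ) (x y : ℂ) : ℂ := n.factorial * coeff n (expS x * cosS y)

/-- `S_n(x,y)`, defined by `e^{xt} sin(yt) = Σ_n S_n(x,y) tⁿ/n!`. -/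
def Spoly (n : ℕ) (x y : ℂ) : ℂ := n.factorial * coeff n (expS x * sinS y)

/-- Apostol–Bernoulli numbers of order `δ`: `ℬ^{(δ)}_n(Λ)`, defined by
`(t/(Λeᵗ−1))^δ = Σ_n ℬ^{(δ)}_n(Λ) tⁿ/n!`. -/
def ABnum (L : ℂ) (d n : ℕ) : ℂ :=
  n.factorial * coeff n ((X * (C L * exp ℂ - 1)⁻¹) ^ d)

/-- Generalized Apostol–Genocchi polynomials `𝒢^{(v)}_{n,μ}(x;λ)`, defined by
`(2t/(λeᵗ+μ))^v e^{xt} = Σ_n 𝒢^{(v)}_{n,μ}(x;λ) tⁿ/n!`. -/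
def Gpoly (lam mu : ℂ) (v n : ℕ) (x : ℂ) : ℂ :=
  n.factorial * coeff n ((C 2 * X * (C lam * exp ℂ + C mu)⁻¹) ^ v * expS x)

end

open Nat in
theorem PowerSeries.factorial_mul_coeff_mul {R : Type*} [CommSemiring R] (f g : R⟦X⟧) (n : ℕ) :
    (n ! : R) * coeff n (f * g)
      = ∑ r ∈ Finset.range (n + 1),
          (n.choose r : R) * ((r ! : R) * coeff r f) * (((n - r) ! : R) * coeff (n - r) g) := by
  rw [coeff_mul, Finset.Nat.sum_antidiagonal_eq_sum_range_succ_mk, Finset.mul_sum]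
  refine Finset.sum_congr rfl fun r hr => ?_
  have hfac : (n ! : R) = n.choose r * r ! * (n - r) ! := by
    rw [← Nat.cast_mul, ← Nat.cast_mul,
      Nat.choose_mul_factorial_mul_factorial (Finset.mem_range_succ_iff.mp hr)]
  rw [hfac]
  ring

theorem expS_add (x k : ℂ) : expS (x + k) = expS x * expS k := by
  simp only [expS, exp_mul_exp_eq_exp_add]

theorem stmt5_general (lam mu : ℂ) (U : ℂ⟦X⟧) (n v : ℕ) (x k z : ℂ) :
    TBs lam mu U v n (x + k) z
      = ∑ r ∈ Finset.range (n + 1),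
          (n.choose r : ℂ) * Bs lam mu v (n - r) x z * Tpoly U r k := by
  have hsplit : bker lam mu ^ v * expS (x + k) * U * sinS z
      = (expS k * U) * (bker lam mu ^ v * expS x * sinS z) := by
    rw [expS_add]; ring
  rw [TBs, hsplit, factorial_mul_coeff_mul]
  refine Finset.sum_congr rfl fun r _ => ?_
  rw [Bs, Tpoly]
  ring

theorem stmt5 (lam mu : ℂ) (hlm : lam + mu ≠ 0) (U : ℂ⟦X⟧) (hU : PowerSeries.coeff 0 U ≠ 0)
    (n v : ℕ) (x k z : ℂ) :
    TBs lam mu U v n (x + k) z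
      = ∑ r ∈ Finset.range (n + 1),
          (n.choose r : ℂ) * Bs lam mu v (n - r) x z * Tpoly U r k :=
  stmt5_general lam mu U n v x k z
end

section
/- For all v, β, n ∈ ℕ₀ and all x, z ∈ ℂ, the double-angle convolution identity Σ_{r=0}^{n} binomial(n,r) · ℬ^{(v)}_{n−r,μ}(x;λ) · _Tℬ^{(s,β)}_{r,μ}(x,2z;λ) = 2 · Σ_{r=0}^{n} binomial(n,r) · ℬ^{(s,v)}_{r,μ}(x,z;λ) · _Tℬ^{(c,β)}_{n−r,μ}(x,z;λ) holds. -/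
/-!
Parametric kinds of generalized Apostol–Bernoulli polynomials (Özat–Çekim–Kızılateş–Qi).
All generating functions are formal power series in `t` over `ℂ`; each polynomial family is
`n!` times the `n`-th coefficient of its generating series.
-/

open PowerSeries

/-!
The sine series of argument `2zt` factors as `2 sin(zt) cos(zt)`, so the generating series of the
left-hand side is exactly twice that of the right-hand side. Both sides are binomial convolutions,
i.e. `n!` times the `n`-th coefficient of a product of two exponential generating series.
The double-angle formula is obtained from Euler's formula `2i sin t = e^{it} - e^{-it}`,
`2 cos t = e^{it} + e^{-it}` and `e^{at} e^{bt} = e^{(a+b)t}`.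
-/

namespace PowerSeries

theorem factorial_mul_coeff_mul_s10 {R : Type*} [CommSemiring R] (f g : R⟦X⟧) (n : ℕ) :
    n.factorial * coeff n (f * g)
      = ∑ r ∈ Finset.range (n + 1),
          (n.choose r : R) * (r.factorial * coeff r f) * ((n - r).factorial * coeff (n - r) g) := by
  rw [coeff_mul, Finset.Nat.sum_antidiagonal_eq_sum_range_succ_mk, Finset.mul_sum]
  refine Finset.sum_congr rfl fun r hr => ?_
  have hfact : (n.choose r : R) * r.factorial * (n - r).factorial = n.factorial := by
    rw [← Nat.cast_mul, ← Nat.cast_mul,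
      Nat.choose_mul_factorial_mul_factorial (Finset.mem_range_succ_iff.mp hr)]
  rw [← hfact]
  ring

theorem rescale_C_mul {R : Type*} [CommSemiring R] (a c : R) (f : R⟦X⟧) :
    rescale a (C c * f) = C c * rescale a f := by
  ext n
  simp only [coeff_rescale, coeff_C_mul]
  ring

theorem two_I_mul_sin :
    C (2 * Complex.I) * sin ℂ = rescale Complex.I (exp ℂ) - rescale (-Complex.I) (exp ℂ) := by
  ext n
  rw [coeff_C_mul, map_sub, coeff_rescale, coeff_rescale, sin, coeff_mk, coeff_exp]
  obtain ⟨k, rfl | rfl⟩ := Nat.even_or_odd' n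
  · simp [pow_mul]
  · simp [pow_succ, pow_mul, Nat.mul_add_div]
    ring

theorem two_mul_cos :
    C 2 * cos ℂ = rescale Complex.I (exp ℂ) + rescale (-Complex.I) (exp ℂ) := by
  ext n
  rw [coeff_C_mul, map_add, coeff_rescale, coeff_rescale, cos, coeff_mk, coeff_exp]
  obtain ⟨k, rfl | rfl⟩ := Nat.even_or_odd' n
  · simp [pow_mul]
    ring
  · simp [pow_succ, pow_mul]

theorem rescale_two_sin : rescale 2 (sin ℂ) = 2 * sin ℂ * cos ℂ := by
  have exp_mul_self (a : ℂ) :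
      rescale a (exp ℂ) * rescale a (exp ℂ) = rescale (a * 2) (exp ℂ) := by
    rw [exp_mul_exp_eq_exp_add, mul_two]
  refine mul_left_cancel₀ (by simp : C (2 * Complex.I) ≠ 0) ?_
  calc C (2 * Complex.I) * rescale 2 (sin ℂ)
      = rescale (Complex.I * 2) (exp ℂ) - rescale (-Complex.I * 2) (exp ℂ) := by
        rw [← rescale_C_mul, two_I_mul_sin, map_sub, rescale_rescale, rescale_rescale]
    _ = (C (2 * Complex.I) * sin ℂ) * (C 2 * cos ℂ) := by
        rw [two_I_mul_sin, two_mul_cos, ← exp_mul_self, ← exp_mul_self]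
        ring
    _ = C (2 * Complex.I) * (2 * sin ℂ * cos ℂ) := by
        rw [map_ofNat]
        ring

end PowerSeries

theorem sinS_two_mul (z : ℂ) : sinS (2 * z) = 2 * sinS z * cosS z := by
  simp only [sinS, cosS]
  rw [← rescale_rescale, rescale_two_sin, map_mul, map_mul, map_ofNat]

theorem stmt10_general (lam mu : ℂ) (U : ℂ⟦X⟧) (v β n : ℕ) (x z : ℂ) :
    ∑ r ∈ Finset.range (n + 1),
        (n.choose r : ℂ) * Bpoly lam mu v (n - r) x * TBs lam mu U β r x (2 * z)
      = 2 * ∑ r ∈ Finset.range (n + 1),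
          (n.choose r : ℂ) * Bs lam mu v r x z * TBc lam mu U β (n - r) x z := by
  have hseries : (bker lam mu ^ β * expS x * U * sinS (2 * z)) * (bker lam mu ^ v * expS x)
      = C 2 * ((bker lam mu ^ v * expS x * sinS z) * (bker lam mu ^ β * expS x * U * cosS z)) := by
    rw [sinS_two_mul, map_ofNat]
    ring
  calc _ = ∑ r ∈ Finset.range (n + 1),
        (n.choose r : ℂ) * TBs lam mu U β r x (2 * z) * Bpoly lam mu v (n - r) x :=
        Finset.sum_congr rfl fun r _ => mul_right_comm _ _ _
    _ = _ := by
        simp only [TBs, Bpoly, Bs, TBc]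
        rw [← factorial_mul_coeff_mul_s10, hseries, coeff_C_mul, mul_left_comm,
          factorial_mul_coeff_mul_s10]

theorem stmt10 (lam mu : ℂ) (hlm : lam + mu ≠ 0) (U : ℂ⟦X⟧) (hU : PowerSeries.coeff 0 U ≠ 0)
    (v β n : ℕ) (x z : ℂ) :
    ∑ r ∈ Finset.range (n + 1),
        (n.choose r : ℂ) * Bpoly lam mu v (n - r) x * TBs lam mu U β r x (2 * z)
      = 2 * ∑ r ∈ Finset.range (n + 1),
          (n.choose r : ℂ) * Bs lam mu v r x z * TBc lam mu U β (n - r) x z :=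
  stmt10_general lam mu U v β n x z
end

section
/- For every n ∈ ℕ, v ∈ ℕ₀ and x ∈ ℂ, the partial derivative with respect to z of the polynomial function z ↦ _Tℬ^{(c,v)}_{n,μ}(x,z;λ) satisfies ∂/∂z [_Tℬ^{(c,v)}_{n,μ}(x,z;λ)] = −n · _Tℬ^{(s,v)}_{n−1,μ}(x,z;λ) for all z ∈ ℂ. -/
/-!
Parametric kinds of generalized Apostol–Bernoulli polynomials (Özat–Çekim–Kızılateş–Qi).
All generating functions are formal power series in `t` over `ℂ`; each polynomial family is
`n!` times the `n`-th coefficient of its generating series.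
-/

open PowerSeries

/-!
Differentiating `rescale z f = Σ fₖ zᵏ tᵏ` coefficientwise in `z` gives `t · rescale z f'`, and
`cos' = -sin`. Hence the `z`-derivative of the `n`-th coefficient of `A(t) cos(zt)` is minus the
`n`-th coefficient of `t A(t) sin(zt)`, i.e. minus the `(n-1)`-th coefficient of `A(t) sin(zt)`;
the factor `n` comes from `n! = n · (n-1)!`.
-/

theorem PowerSeries.derivative_cos {A : Type*} [CommRing A] [Algebra ℚ A] :
    d⁄dX A (cos A) = -sin A := by
  ext n
  rw [coeff_derivative, map_neg, cos, sin, coeff_mk, coeff_mk]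
  rcases Nat.even_or_odd n with hn | ⟨m, rfl⟩
  · simp [hn, hn.add_one]
  · have h_odd : ¬Even (2 * m + 1) := Nat.not_even_iff_odd.mpr (odd_two_mul_add_one m)
    rw [if_pos (by exact ⟨m + 1, by ring⟩), if_neg h_odd,
      show (2 * m + 1 + 1) / 2 = m + 1 by omega, show (2 * m + 1) / 2 = m by omega,
      ← map_natCast (algebraMap ℚ A), ← map_one (algebraMap ℚ A), ← map_add, ← map_mul,
      ← map_neg, Nat.factorial_succ]
    congr 1
    push_cast
    field_simp
    ring

section Rescale

variable {𝕜 : Type*} [NontriviallyNormedField 𝕜]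

theorem PowerSeries.hasDerivAt_coeff_rescale (f : 𝕜⟦X⟧) (n : ℕ) (w : 𝕜) :
    HasDerivAt (fun w => coeff n (rescale w f)) (coeff n (X * rescale w (d⁄dX 𝕜 f))) w := by
  cases n with
  | zero => simpa using hasDerivAt_const w (coeff 0 f)
  | succ n =>
    simp only [coeff_rescale, coeff_succ_X_mul, coeff_derivative]
    refine ((hasDerivAt_pow (n + 1) w).mul_const (coeff (n + 1) f)).congr_deriv ?_
    rw [add_tsub_cancel_right]
    push_cast
    ring

theorem PowerSeries.hasDerivAt_coeff_mul_rescale (g f : 𝕜⟦X⟧) (n : ℕ) (w : 𝕜) :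
    HasDerivAt (fun w => coeff n (g * rescale w f))
      (coeff n (X * g * rescale w (d⁄dX 𝕜 f))) w := by
  rw [funext fun w => coeff_mul n g (rescale w f), mul_comm X g, mul_assoc, coeff_mul]
  exact HasDerivAt.fun_sum fun p _ => (hasDerivAt_coeff_rescale f p.2 w).const_mul (coeff p.1 g)

end Rescale

theorem stmt13_general (lam mu : ℂ) (U : ℂ⟦X⟧)
    (n : ℕ) (v : ℕ) (x : ℂ) (z : ℂ) :
    deriv (fun z : ℂ => TBc lam mu U v n x z) z
      = -(n : ℂ) * TBs lam mu U v (n - 1) x z := by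
  set A := bker lam mu ^ v * expS x * U
  have h := ((hasDerivAt_coeff_mul_rescale A (cos ℂ) n z).const_mul (n.factorial : ℂ)).deriv
  rw [derivative_cos, map_neg, mul_neg, map_neg, mul_assoc X] at h
  unfold TBc TBs cosS sinS
  rw [h]
  cases n with
  | zero => simp
  | succ m => rw [coeff_succ_X_mul, Nat.factorial_succ, add_tsub_cancel_right]; push_cast; ring

theorem stmt13 (lam mu : ℂ) (hlm : lam + mu ≠ 0) (U : ℂ⟦X⟧) (hU : PowerSeries.coeff 0 U ≠ 0)
    (n : ℕ) (hn : 1 ≤ n) (v : ℕ) (x : ℂ) (z : ℂ) :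
    deriv (fun z : ℂ => TBc lam mu U v n x z) z
      = -(n : ℂ) * TBs lam mu U v (n - 1) x z :=
  stmt13_general lam mu U n v x z
end

section
/- For every n ∈ ℕ, v ∈ ℕ₀ and x ∈ ℂ, the partial derivative with respect to z of the polynomial function z ↦ _Tℬ^{(s,v)}_{n,μ}(x,z;λ) satisfies ∂/∂z [_Tℬ^{(s,v)}_{n,μ}(x,z;λ)] = n · _Tℬ^{(c,v)}_{n−1,μ}(x,z;λ) for all z ∈ ℂ. -/
/-!
Parametric kinds of generalized Apostol–Bernoulli polynomials (Özat–Çekim–Kızılateş–Qi).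
All generating functions are formal power series in `t` over `ℂ`; each polynomial family is
`n!` times the `n`-th coefficient of its generating series.
-/

open PowerSeries

/-! Since `∂/∂z sin (z t) = t cos (z t)`, differentiating the sine generating function in `z`
multiplies it by `t` and replaces `sin` by `cos`; multiplication by `t` shifts coefficients by one,
which turns `n!` into `n · (n-1)!`. -/

namespace PowerSeries

theorem derivative_sin (A : Type*) [CommRing A] [Algebra ℚ A] : d⁄dX A (sin A) = cos A := by
  ext n
  rw [coeff_derivative, sin, cos, coeff_mk, coeff_mk]
  rcases Nat.even_or_odd n with hn | hn
  · have hdiv : (n + 1) / 2 = n / 2 := by rcases hn with ⟨m, rfl⟩; omega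
    have key : (n + 1 : A) = algebraMap ℚ A (n + 1) := by
      rw [map_add, map_natCast, map_one]
    rw [if_neg (Nat.not_even_iff_odd.mpr hn.add_one), if_pos hn, hdiv, key, ← map_mul,
      Nat.factorial_succ, Nat.cast_mul, Nat.cast_add_one]
    congr 1
    field_simp
  · rw [if_pos hn.add_one, if_neg (Nat.not_even_iff_odd.mpr hn), zero_mul]

theorem factorial_mul_coeff_X_mul {R : Type*} [CommSemiring R] (φ : R⟦X⟧) (n : ℕ) :
    (n.factorial : R) * coeff n (X * φ) = n * ((n - 1).factorial * coeff (n - 1) φ) := by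
  cases n with
  | zero => simp
  | succ n => rw [coeff_succ_X_mul, Nat.factorial_succ]; push_cast; ring_nf

section Rescale

variable {𝕜 : Type*} [NontriviallyNormedField 𝕜]

theorem coeff_X_mul_rescale_derivative (f : 𝕜⟦X⟧) (z : 𝕜) (n : ℕ) :
    coeff n (X * rescale z (d⁄dX 𝕜 f)) = n * z ^ (n - 1) * coeff n f := by
  cases n with
  | zero => simp
  | succ n => rw [coeff_succ_X_mul, coeff_rescale, coeff_derivative]; push_cast; ring

theorem hasDerivAt_coeff_rescale_s14 (f : 𝕜⟦X⟧) (n : ℕ) (z : 𝕜) :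
    HasDerivAt (fun w ↦ coeff n (rescale w f)) (coeff n (X * rescale z (d⁄dX 𝕜 f))) z := by
  simp only [coeff_rescale, coeff_X_mul_rescale_derivative]
  exact (hasDerivAt_pow n z).mul_const _

theorem hasDerivAt_coeff_mul_rescale_s14 (A f : 𝕜⟦X⟧) (n : ℕ) (z : 𝕜) :
    HasDerivAt (fun w ↦ coeff n (A * rescale w f))
      (coeff n (A * (X * rescale z (d⁄dX 𝕜 f)))) z := by
  simpa only [← coeff_mul] using HasDerivAt.fun_sum (u := Finset.HasAntidiagonal.antidiagonal n)
    fun p _ ↦ (hasDerivAt_coeff_rescale_s14 f p.2 z).const_mul (coeff p.1 A)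

end Rescale

end PowerSeries

theorem stmt14_general (lam mu : ℂ) (U : ℂ⟦X⟧)
    (n : ℕ) (v : ℕ) (x : ℂ) (z : ℂ) :
    deriv (fun z : ℂ => TBs lam mu U v n x z) z
      = n * TBc lam mu U v (n - 1) x z := by
  have h := ((hasDerivAt_coeff_mul_rescale_s14 (bker lam mu ^ v * expS x * U) (sin ℂ) n z).const_mul
    (n.factorial : ℂ)).deriv
  rw [derivative_sin, mul_left_comm, factorial_mul_coeff_X_mul] at h
  exact h

theorem stmt14 (lam mu : ℂ) (hlm : lam + mu ≠ 0) (U : ℂ⟦X⟧) (hU : PowerSeries.coeff 0 U ≠ 0)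
    (n : ℕ) (hn : 1 ≤ n) (v : ℕ) (x : ℂ) (z : ℂ) :
    deriv (fun z : ℂ => TBs lam mu U v n x z) z
      = n * TBc lam mu U v (n - 1) x z :=
  stmt14_general lam mu U n v x z
end

section
/- Let m, n ∈ ℕ with n ≥ m, v ∈ ℕ₀ and α, β, x, z ∈ ℂ. Then the m-th partial derivative with respect to x of the function x ↦ _Tℬ^{(s,v)}_{n,μ}(x+α, z+β;λ) equals Σ_{r=m}^{n} m! · binomial(n,r) · binomial(r,m) · [ _Tℬ^{(s,v)}_{r−m,μ}(x,z;λ) · C_{n−r}(α,β) + _Tℬ^{(c,v)}_{r−m,μ}(x,z;λ) · S_{n−r}(α,β) ]. -/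
/-!
Parametric kinds of generalized Apostol–Bernoulli polynomials (Özat–Çekim–Kızılateş–Qi).
All generating functions are formal power series in `t` over `ℂ`; each polynomial family is
`n!` times the `n`-th coefficient of its generating series.
-/

open PowerSeries

/-!
Since `e^{(x+α)t} = e^{xt} e^{αt}`, the function is `n! [tⁿ] (e^{xt} G)` with `G` independent of
`x`. Differentiating in `x` multiplies the series by `t`, so its `m`-th derivative is
`n! [t^{n-m}] (e^{xt} G)`. The addition formula `sin((z+β)t) = sin(zt) cos(βt) + cos(zt) sin(βt)`,
which follows from Euler's formula `e^{±izt} = cos(zt) ± i sin(zt)`, splits `e^{xt} G` into two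
products, and the coefficients of a product are binomial convolutions.
-/

open Finset

lemma expS_mul_expS (a b : ℂ) : expS a * expS b = expS (a + b) :=
  exp_mul_exp_eq_exp_add a b

lemma coeff_expS (n : ℕ) (x : ℂ) : coeff n (expS x) = x ^ n / n.factorial := by
  simp [expS, coeff_rescale, coeff_exp, div_eq_mul_inv]

lemma expS_mul_eq_cosS_add_C_mul_sinS {w : ℂ} (hw : w ^ 2 = -1) (z : ℂ) :
    expS (w * z) = cosS z + C w * sinS z := by
  ext n
  obtain ⟨k, rfl | rfl⟩ := Nat.even_or_odd' n
  · simp [coeff_expS, cosS, sinS, coeff_rescale, PowerSeries.cos, PowerSeries.sin, mul_pow, pow_mul]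
    rw [← hw]
    ring
  · have hk : (2 * k + 1) / 2 = k := by omega
    simp [coeff_expS, cosS, sinS, coeff_rescale, PowerSeries.cos, PowerSeries.sin, hk, pow_succ,
      mul_pow, pow_mul]
    rw [← hw]
    ring

lemma sinS_add (a b : ℂ) : sinS (a + b) = sinS a * cosS b + cosS a * sinS b := by
  have hI : Complex.I ^ 2 = -1 := Complex.I_sq
  have hnI : (-Complex.I) ^ 2 = -1 := by rw [neg_sq, Complex.I_sq]
  have hplus := expS_mul_expS (Complex.I * a) (Complex.I * b)
  have hminus := expS_mul_expS (-Complex.I * a) (-Complex.I * b)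
  rw [← mul_add] at hplus hminus
  simp only [expS_mul_eq_cosS_add_C_mul_sinS hI] at hplus
  simp only [expS_mul_eq_cosS_add_C_mul_sinS hnI] at hminus
  refine mul_left_cancel₀ (show (C (2 * Complex.I) : ℂ⟦X⟧) ≠ 0 by simp) ?_
  simp only [map_mul, map_neg, map_ofNat] at hplus hminus ⊢
  linear_combination hminus - hplus

lemma hasDerivAt_coeff_expS (n : ℕ) (x : ℂ) :
    HasDerivAt (fun y => coeff n (expS y)) (coeff n (X * expS x)) x := by
  cases n with
  | zero => simpa [coeff_expS] using hasDerivAt_const x (1 : ℂ)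
  | succ n =>
    simp only [coeff_succ_X_mul, coeff_expS]
    refine ((hasDerivAt_pow (n + 1) x).div_const ((n + 1).factorial : ℂ)).congr_deriv ?_
    rw [Nat.factorial_succ]
    push_cast
    field_simp

lemma hasDerivAt_coeff_expS_mul (G : ℂ⟦X⟧) (n : ℕ) (x : ℂ) :
    HasDerivAt (fun y => coeff n (expS y * G)) (coeff n (X * expS x * G)) x := by
  have := HasDerivAt.fun_sum (u := antidiagonal n)
    fun p _ => (hasDerivAt_coeff_expS p.1 x).mul_const (coeff p.2 G)
  simpa only [← coeff_mul] using this

lemma iteratedDeriv_coeff_expS_mul (G : ℂ⟦X⟧) {m n : ℕ} (hmn : m ≤ n) :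
    iteratedDeriv m (fun y => coeff n (expS y * G)) = fun y => coeff (n - m) (expS y * G) := by
  induction m generalizing n with
  | zero => simp
  | succ m ih =>
    obtain ⟨n, rfl⟩ : ∃ k, n = k + 1 := ⟨n - 1, by omega⟩
    have hderiv : deriv (fun y => coeff (n + 1) (expS y * G)) = fun y => coeff n (expS y * G) :=
      funext fun y => by
        rw [(hasDerivAt_coeff_expS_mul G (n + 1) y).deriv, mul_assoc, coeff_succ_X_mul]
    rw [iteratedDeriv_succ', hderiv, ih (by omega), Nat.add_sub_add_right]

lemma factorial_mul_choose_mul_choose_mul_factorial {m r n : ℕ} (hmr : m ≤ r) (hrn : r ≤ n) :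
    m.factorial * n.choose r * r.choose m * (r - m).factorial * (n - r).factorial
      = n.factorial := by
  rw [← Nat.choose_mul_factorial_mul_factorial hrn, ← Nat.choose_mul_factorial_mul_factorial hmr]
  ring

lemma factorial_mul_coeff_sub_mul {R : Type*} [CommSemiring R] (F H : R⟦X⟧) {m n : ℕ}
    (hmn : m ≤ n) :
    (n.factorial : R) * coeff (n - m) (F * H)
      = ∑ r ∈ Icc m n, (m.factorial : R) * n.choose r * r.choose m *
          ((r - m).factorial * coeff (r - m) F * ((n - r).factorial * coeff (n - r) H)) := by
  rw [coeff_mul, Nat.sum_antidiagonal_eq_sum_range_succ_mk, mul_sum,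
    ← Ico_add_one_right_eq_Icc, sum_Ico_eq_sum_range, show n + 1 - m = n - m + 1 by omega]
  refine sum_congr rfl fun k hk_mem => ?_
  have hk : k ≤ n - m := Nat.lt_succ_iff.mp (mem_range.mp hk_mem)
  have hfac := factorial_mul_choose_mul_choose_mul_factorial (Nat.le_add_right m k)
    (show m + k ≤ n by omega)
  rw [Nat.add_sub_cancel_left, show n - (m + k) = n - m - k by omega] at hfac ⊢
  rw [← hfac]
  push_cast
  ring

theorem stmt15_general (lam mu : ℂ) (U : ℂ⟦X⟧)
    (m n : ℕ) (hmn : m ≤ n) (v : ℕ) (α β x z : ℂ) :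
    iteratedDeriv m (fun x : ℂ => TBs lam mu U v n (x + α) (z + β)) x
      = ∑ r ∈ Finset.Icc m n,
          (m.factorial : ℂ) * (n.choose r : ℂ) * (r.choose m : ℂ) *
            (TBs lam mu U v (r - m) x z * Cpoly (n - r) α β
              + TBc lam mu U v (r - m) x z * Spoly (n - r) α β) := by
  set G := bker lam mu ^ v * expS α * U * sinS (z + β) with hG
  have hshift : (fun y => TBs lam mu U v n (y + α) (z + β))
      = fun y => (n.factorial : ℂ) * coeff n (expS y * G) := by
    funext y
    rw [TBs, ← expS_mul_expS, hG]
    congr 2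
    ring
  have hsplit : expS x * G
      = bker lam mu ^ v * expS x * U * sinS z * (expS α * cosS β)
        + bker lam mu ^ v * expS x * U * cosS z * (expS α * sinS β) := by
    rw [hG, sinS_add]
    ring
  rw [hshift, iteratedDeriv_const_mul_field, iteratedDeriv_coeff_expS_mul G hmn]
  dsimp only
  rw [hsplit, map_add, mul_add, factorial_mul_coeff_sub_mul _ _ hmn,
    factorial_mul_coeff_sub_mul _ _ hmn, ← sum_add_distrib]
  simp only [TBs, TBc, Cpoly, Spoly, mul_add]

theorem stmt15 (lam mu : ℂ) (hlm : lam + mu ≠ 0) (U : ℂ⟦X⟧) (hU : PowerSeries.coeff 0 U ≠ 0)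
    (m n : ℕ) (hm : 1 ≤ m) (hmn : m ≤ n) (v : ℕ) (α β x z : ℂ) :
    iteratedDeriv m (fun x : ℂ => TBs lam mu U v n (x + α) (z + β)) x
      = ∑ r ∈ Finset.Icc m n,
          (m.factorial : ℂ) * (n.choose r : ℂ) * (r.choose m : ℂ) *
            (TBs lam mu U v (r - m) x z * Cpoly (n - r) α β
              + TBc lam mu U v (r - m) x z * Spoly (n - r) α β) :=
  stmt15_general lam mu U m n hmn v α β x z
end
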